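/- arXiv:1712.03065 — 3 statements merged into one kernel-verified Lean document; each statement's English description precedes it below -/
import Mathlib

section
/- Let $0 < y_0 < y_1$, $\gamma > -1$, $K > 0$, $\rho \le 0$. Suppose $f : (0,y_1) \to \mathbb{R}^+$ is $C^2$ with $K^{-1} \le f(x) \le K$, $|f'(x)| \le K$, $|f''(x)| \le K x^\rho$ for all $x \in (0,y_1)$. Define $g(x) = (y_0-x)^{-\gamma-1}\int_x^{y_0}(y_0-y)^\gamma f(y)\,dy$ for $x < y_0$ and $g(x) = (x-y_0)^{-\gamma-1}\int_{y_0}^x (y-y_0)^\gamma f(y)\,dy$ for $x > y_0$. Then $g$ extends to a $C^2$ function on $(0,y_1)$ and there exists $\widetilde K$ depending only on $K,\rho,y_0,y_1,\gamma$ such that $\widetilde K^{-1} \le g \le \widetilde K$, $|g'| \le \widetilde K$, and $|g''(x)| \le \widetilde K x^\rho$ on $(0,y_1)$. -/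
/-!
Substituting `y = x + t (y₀ - x)` turns both branches of the average into the single formula
`g x = ∫₀¹ (1 - t)^γ f (x + t (y₀ - x)) dt`, which makes sense for every `x`, including `x = y₀`.
Each `x`-derivative of the integrand produces a factor `1 - t`, so `g'` and `g''` are the same
averages of `f'` and `f''` with exponents `γ + 1` and `γ + 2`; differentiation under the integral
is dominated locally because near a point `x₀` the segment `[x, y₀]` stays above some `m > 0`,
where the antitone bound `K y^ρ` is at most `K m^ρ`. The estimates then come from
`∫₀¹ (1 - t)^β dt = 1 / (β + 1)` and from `min x y₀ ^ ρ ≤ (y₀ / y₁)^ρ x^ρ`.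
-/

open Set MeasureTheory intervalIntegral
open scoped Interval

noncomputable def segmentAverage (β y₀ : ℝ) (h : ℝ → ℝ) (x : ℝ) : ℝ :=
  ∫ t in (0:ℝ)..1, (1 - t) ^ β * h (x + t * (y₀ - x))

lemma add_mul_sub_mem_uIcc (x y : ℝ) {t : ℝ} (ht : t ∈ Icc (0:ℝ) 1) :
    x + t * (y - x) ∈ [[x, y]] := by
  simpa only [smul_eq_mul] using (convex_uIcc x y).add_smul_sub_mem left_mem_uIcc right_mem_uIcc ht

lemma add_mul_sub_mem_Ioo {a b x y t : ℝ} (hx : x ∈ Ioo a b) (hy : y ∈ Ioo a b)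
    (ht : t ∈ Icc (0:ℝ) 1) : x + t * (y - x) ∈ Ioo a b :=
  ordConnected_Ioo.uIcc_subset hx hy (add_mul_sub_mem_uIcc x y ht)

lemma norm_one_sub_rpow_mul_le {β t u c : ℝ} (ht : t ≤ 1) (hu : |u| ≤ c) :
    ‖(1 - t) ^ β * u‖ ≤ (1 - t) ^ β * c := by
  have hpow : 0 ≤ (1 - t) ^ β := Real.rpow_nonneg (by linarith) β
  rw [Real.norm_eq_abs, abs_mul, abs_of_nonneg hpow]
  exact mul_le_mul_of_nonneg_left hu hpow

lemma intervalIntegrable_one_sub_rpow {β : ℝ} (hβ : -1 < β) :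
    IntervalIntegrable (fun t : ℝ => (1 - t) ^ β) volume 0 1 := by
  simpa using ((intervalIntegrable_rpow' (a := 0) (b := 1) hβ).comp_sub_left 1).symm

lemma integral_one_sub_rpow {β : ℝ} (hβ : -1 < β) :
    ∫ t in (0:ℝ)..1, (1 - t) ^ β = (β + 1)⁻¹ := by
  rw [integral_comp_sub_left (fun s : ℝ => s ^ β) 1]
  norm_num [integral_rpow (Or.inl hβ), Real.zero_rpow (by linarith : β + 1 ≠ 0)]

section Segment

variable {a b β y₀ x x₀ m : ℝ} {h h' B : ℝ → ℝ}

lemma add_mul_sub_mem_Ioo_of_mem_uIoc {t : ℝ} (hx : x ∈ Ioo a b) (hy₀ : y₀ ∈ Ioo a b)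
    (ht : t ∈ Ι (0:ℝ) 1) : x + t * (y₀ - x) ∈ Ioo a b :=
  add_mul_sub_mem_Ioo hx hy₀ (Ioc_subset_Icc_self ((uIoc_of_le (zero_le_one' ℝ)) ▸ ht))

lemma intervalIntegrable_segmentAverage (hβ : -1 < β) (hc : ContinuousOn h (Ioo a b))
    (hy₀ : y₀ ∈ Ioo a b) (hx : x ∈ Ioo a b) :
    IntervalIntegrable (fun t => (1 - t) ^ β * h (x + t * (y₀ - x))) volume 0 1 := by
  refine (intervalIntegrable_one_sub_rpow hβ).mul_continuousOn ?_
  refine hc.comp (by fun_prop) fun t ht => add_mul_sub_mem_Ioo hx hy₀ ?_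
  rwa [uIcc_of_le zero_le_one] at ht

lemma abs_segmentAverage_le (hβ : -1 < β) {c : ℝ}
    (hbound : ∀ t ∈ Icc (0:ℝ) 1, |h (x + t * (y₀ - x))| ≤ c) :
    |segmentAverage β y₀ h x| ≤ c / (β + 1) := by
  unfold segmentAverage
  have := norm_integral_le_of_norm_le (zero_le_one' ℝ)
    (ae_of_all _ fun t ht => norm_one_sub_rpow_mul_le (β := β) ht.2
      (hbound t (Ioc_subset_Icc_self ((uIoc_of_le (zero_le_one' ℝ)) ▸ ht))))
    ((intervalIntegrable_one_sub_rpow hβ).mul_const c)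
  rwa [intervalIntegral.integral_mul_const, integral_one_sub_rpow hβ, inv_mul_eq_div] at this

lemma div_le_segmentAverage (hβ : -1 < β) (hc : ContinuousOn h (Ioo a b))
    (hy₀ : y₀ ∈ Ioo a b) (hx : x ∈ Ioo a b) {c : ℝ} (hle : ∀ y ∈ Ioo a b, c ≤ h y) :
    c / (β + 1) ≤ segmentAverage β y₀ h x := by
  have := integral_mono_on zero_le_one ((intervalIntegrable_one_sub_rpow hβ).mul_const c)
    (intervalIntegrable_segmentAverage hβ hc hy₀ hx) fun t ht =>
      mul_le_mul_of_nonneg_left (hle _ (add_mul_sub_mem_Ioo hx hy₀ ht))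
        (Real.rpow_nonneg (by linarith [ht.2]) β)
  rwa [intervalIntegral.integral_mul_const, integral_one_sub_rpow hβ, inv_mul_eq_div] at this

lemma exists_Ioo_nhds_segment (hy₀ : y₀ ∈ Ioo a b) (hx₀ : x₀ ∈ Ioo a b) :
    ∃ m ∈ Ioo a b, Ioo m b ∈ nhds x₀ ∧ y₀ ∈ Ioo m b := by
  obtain ⟨m, ham, hm⟩ := exists_between (lt_min hx₀.1 hy₀.1)
  exact ⟨m, ⟨ham, (hm.trans_le (min_le_left _ _)).trans hx₀.2⟩,
    Ioo_mem_nhds (hm.trans_le (min_le_left _ _)) hx₀.2, (hm.trans_le (min_le_right _ _)), hy₀.2⟩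

lemma abs_le_of_antitoneOn_bound {y : ℝ} (hB : ∀ x ∈ Ioo a b, |h x| ≤ B x)
    (hBanti : AntitoneOn B (Ioo a b)) (hm : m ∈ Ioo a b) (hy : y ∈ Ioo m b) : |h y| ≤ B m :=
  (hB y ⟨hm.1.trans hy.1, hy.2⟩).trans (hBanti hm ⟨hm.1.trans hy.1, hy.2⟩ hy.1.le)

lemma hasDerivAt_segmentAverage (hβ : -1 < β)
    (hd : ∀ x ∈ Ioo a b, HasDerivAt h (h' x) x) (hc' : ContinuousOn h' (Ioo a b))
    (hB : ∀ x ∈ Ioo a b, |h' x| ≤ B x) (hBanti : AntitoneOn B (Ioo a b))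
    (hy₀ : y₀ ∈ Ioo a b) (hx₀ : x₀ ∈ Ioo a b) :
    HasDerivAt (segmentAverage β y₀ h) (segmentAverage (β + 1) y₀ h' x₀) x₀ := by
  have hc : ContinuousOn h (Ioo a b) := fun x hx => (hd x hx).continuousAt.continuousWithinAt
  obtain ⟨m, hm, hnhds, hy₀m⟩ := exists_Ioo_nhds_segment hy₀ hx₀
  refine (hasDerivAt_integral_of_dominated_loc_of_deriv_le
    (F := fun x t => (1 - t) ^ β * h (x + t * (y₀ - x)))
    (F' := fun x t => (1 - t) ^ (β + 1) * h' (x + t * (y₀ - x)))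
    (bound := fun t => (1 - t) ^ (β + 1) * B m) hnhds ?_
    (intervalIntegrable_segmentAverage hβ hc hy₀ hx₀) ?_ ?_
    ((intervalIntegrable_one_sub_rpow (by linarith)).mul_const _) ?_).2
  · filter_upwards [hnhds] with x hx
    exact (intervalIntegrable_iff.mp (intervalIntegrable_segmentAverage hβ hc hy₀
      (Ioo_subset_Ioo_left hm.1.le hx))).aestronglyMeasurable
  · exact (intervalIntegrable_iff.mp (intervalIntegrable_segmentAverage (by linarith) hc' hy₀
      hx₀)).aestronglyMeasurable
  · refine ae_of_all _ fun t ht x hx => norm_one_sub_rpow_mul_le ?_ ?_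
    · exact ((uIoc_of_le (zero_le_one' ℝ)) ▸ ht).2
    · exact abs_le_of_antitoneOn_bound hB hBanti hm (add_mul_sub_mem_Ioo_of_mem_uIoc hx hy₀m ht)
  · refine ae_of_all _ fun t ht x hx => ?_
    have hp := add_mul_sub_mem_Ioo_of_mem_uIoc hx hy₀m ht
    have hpath : HasDerivAt (fun x => x + t * (y₀ - x)) (1 - t) x := by
      refine ((hasDerivAt_id' x).add
        (((hasDerivAt_const x y₀).sub (hasDerivAt_id' x)).const_mul t)).congr_deriv ?_
      ring
    refine (((hd _ (Ioo_subset_Ioo_left hm.1.le hp)).comp x hpath).const_mul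
      ((1 - t) ^ β)).congr_deriv ?_
    rw [Real.rpow_add_one' (by linarith [((uIoc_of_le (zero_le_one' ℝ)) ▸ ht).2]) (by linarith)]
    ring

lemma continuousOn_segmentAverage (hβ : -1 < β) (hc : ContinuousOn h (Ioo a b))
    (hB : ∀ x ∈ Ioo a b, |h x| ≤ B x) (hBanti : AntitoneOn B (Ioo a b)) (hy₀ : y₀ ∈ Ioo a b) :
    ContinuousOn (segmentAverage β y₀ h) (Ioo a b) := by
  intro x₀ hx₀
  obtain ⟨m, hm, hnhds, hy₀m⟩ := exists_Ioo_nhds_segment hy₀ hx₀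
  refine (continuousAt_of_dominated_interval
    (F := fun x t => (1 - t) ^ β * h (x + t * (y₀ - x)))
    (bound := fun t => (1 - t) ^ β * B m) ?_ ?_
    ((intervalIntegrable_one_sub_rpow hβ).mul_const _) ?_).continuousWithinAt
  · filter_upwards [hnhds] with x hx
    exact (intervalIntegrable_iff.mp (intervalIntegrable_segmentAverage hβ hc hy₀
      (Ioo_subset_Ioo_left hm.1.le hx))).aestronglyMeasurable
  · filter_upwards [hnhds] with x hx
    refine ae_of_all _ fun t ht =>
      norm_one_sub_rpow_mul_le ((uIoc_of_le (zero_le_one' ℝ)) ▸ ht).2 ?_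
    exact abs_le_of_antitoneOn_bound hB hBanti hm (add_mul_sub_mem_Ioo_of_mem_uIoc hx hy₀m ht)
  · refine ae_of_all _ fun t ht => continuousAt_const.mul ?_
    have hp := add_mul_sub_mem_Ioo_of_mem_uIoc hx₀ hy₀ ht
    exact (hc.continuousAt (isOpen_Ioo.mem_nhds hp)).comp (f := fun x => x + t * (y₀ - x))
      (by fun_prop)

end Segment

lemma segmentAverage_eq_of_lt {γ y₀ x : ℝ} (f : ℝ → ℝ) (hx : x < y₀) :
    segmentAverage γ y₀ f x = (y₀ - x) ^ (-γ - 1) * ∫ y in x..y₀, (y₀ - y) ^ γ * f y := by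
  have hc : 0 < y₀ - x := sub_pos.mpr hx
  have hsub := integral_comp_mul_add (a := 0) (b := 1) (fun y => (y₀ - y) ^ γ * f y) hc.ne' x
  rw [mul_zero, zero_add, mul_one, sub_add_cancel, smul_eq_mul] at hsub
  have hpoint : ∀ t ∈ [[(0:ℝ), 1]], (1 - t) ^ γ * f (x + t * (y₀ - x))
      = (y₀ - x) ^ (-γ) * ((y₀ - ((y₀ - x) * t + x)) ^ γ * f ((y₀ - x) * t + x)) := by
    intro t ht
    rw [uIcc_of_le (zero_le_one' ℝ)] at ht
    rw [show y₀ - ((y₀ - x) * t + x) = (y₀ - x) * (1 - t) by ring,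
      Real.mul_rpow hc.le (by linarith [ht.2]), Real.rpow_neg hc.le,
      show (y₀ - x) * t + x = x + t * (y₀ - x) by ring]
    field_simp
  rw [segmentAverage, integral_congr hpoint, intervalIntegral.integral_const_mul, hsub,
    Real.rpow_sub_one hc.ne']
  ring

lemma segmentAverage_eq_of_gt {γ y₀ x : ℝ} (f : ℝ → ℝ) (hx : y₀ < x) :
    segmentAverage γ y₀ f x = (x - y₀) ^ (-γ - 1) * ∫ y in y₀..x, (y - y₀) ^ γ * f y := by
  have hrefl := segmentAverage_eq_of_lt (γ := γ) (fun y => f (-y)) (neg_lt_neg hx)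
  have hflip : ∫ y in -x..-y₀, (-y₀ - y) ^ γ * f (-y) = ∫ y in y₀..x, (y - y₀) ^ γ * f y := by
    calc ∫ y in -x..-y₀, (-y₀ - y) ^ γ * f (-y)
        = ∫ y in -x..-y₀, (fun y => (y - y₀) ^ γ * f y) (-y) := by
          congr 1; funext y; ring_nf
      _ = _ := by
          rw [intervalIntegral.integral_comp_neg (fun y => (y - y₀) ^ γ * f y), neg_neg, neg_neg]
  have hsym : segmentAverage γ (-y₀) (fun y => f (-y)) (-x) = segmentAverage γ y₀ f x := by
    simp only [segmentAverage]
    congr 1; funext t; ring_nf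
  rwa [neg_sub_neg, hflip, hsym] at hrefl

lemma min_rpow_le_div_rpow_mul_rpow {x y₀ y₁ ρ : ℝ} (hρ : ρ ≤ 0) (hx : x ∈ Ioc 0 y₁)
    (hy₀ : 0 < y₀) (hy : y₀ ≤ y₁) : min x y₀ ^ ρ ≤ (y₀ / y₁) ^ ρ * x ^ ρ := by
  rcases le_total x y₀ with hxy | hxy
  · rw [min_eq_left hxy]
    refine le_mul_of_one_le_left (Real.rpow_nonneg hx.1.le _) ?_
    exact Real.one_le_rpow_of_pos_of_le_one_of_nonpos (div_pos hy₀ (hy₀.trans_le hy))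
      ((div_le_one (hy₀.trans_le hy)).mpr hy) hρ
  · rw [min_eq_right hxy, Real.div_rpow hy₀.le (hy₀.trans_le hy).le]
    calc y₀ ^ ρ = y₀ ^ ρ / y₁ ^ ρ * y₁ ^ ρ := by
          field_simp [(Real.rpow_pos_of_pos (hy₀.trans_le hy) ρ).ne']
      _ ≤ y₀ ^ ρ / y₁ ^ ρ * x ^ ρ :=
          mul_le_mul_of_nonneg_left (Real.rpow_le_rpow_of_nonpos hx.1 hx.2 hρ)
            (div_nonneg (Real.rpow_nonneg hy₀.le ρ) (Real.rpow_nonneg (hy₀.trans_le hy).le ρ))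

section Estimates

variable {y₀ y₁ γ K ρ x : ℝ}

lemma abs_segmentAverage_le_mul_rpow {β : ℝ} {h : ℝ → ℝ} (hβ : -1 < β) (hK : 0 ≤ K)
    (hρ : ρ ≤ 0) (hy₀ : y₀ ∈ Ioo 0 y₁) (hx : x ∈ Ioo 0 y₁)
    (hh : ∀ y ∈ Ioo 0 y₁, |h y| ≤ K * y ^ ρ) :
    |segmentAverage β y₀ h x| ≤ K * (y₀ / y₁) ^ ρ / (β + 1) * x ^ ρ := by
  have hβ1 : 0 < β + 1 := by linarith
  calc |segmentAverage β y₀ h x| ≤ K * min x y₀ ^ ρ / (β + 1) :=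
        abs_segmentAverage_le hβ fun t ht => (hh _ (add_mul_sub_mem_Ioo hx hy₀ ht)).trans
          (mul_le_mul_of_nonneg_left (Real.rpow_le_rpow_of_nonpos (lt_min hx.1 hy₀.1)
            (add_mul_sub_mem_uIcc x y₀ ht).1 hρ) hK)
    _ ≤ K * ((y₀ / y₁) ^ ρ * x ^ ρ) / (β + 1) := by
        gcongr
        exact min_rpow_le_div_rpow_mul_rpow hρ (Ioo_subset_Ioc_self hx) hy₀.1 hy₀.2.le
    _ = K * (y₀ / y₁) ^ ρ / (β + 1) * x ^ ρ := by ring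

lemma segmentAverage_estimates {f f' f'' : ℝ → ℝ} (hγ : -1 < γ) (hK : 0 < K) (hρ : ρ ≤ 0)
    (hy₀ : y₀ ∈ Ioo 0 y₁) (hfc : ContinuousOn f (Ioo 0 y₁))
    (hfb : ∀ x ∈ Ioo (0:ℝ) y₁, K⁻¹ ≤ f x ∧ f x ≤ K ∧ |f' x| ≤ K ∧ |f'' x| ≤ K * x ^ ρ)
    (hx : x ∈ Ioo 0 y₁) :
    let K' := max (K * (γ + 1)) (K * (y₀ / y₁) ^ ρ / (γ + 1))
    K'⁻¹ ≤ segmentAverage γ y₀ f x ∧ segmentAverage γ y₀ f x ≤ K' ∧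
      |segmentAverage (γ + 1) y₀ f' x| ≤ K' ∧
      |segmentAverage (γ + 1 + 1) y₀ f'' x| ≤ K' * x ^ ρ := by
  intro K'
  have hγ1 : 0 < γ + 1 := by linarith
  have hC : 1 ≤ (y₀ / y₁) ^ ρ := Real.one_le_rpow_of_pos_of_le_one_of_nonpos
    (div_pos hy₀.1 (hy₀.1.trans hy₀.2)) ((div_le_one (hy₀.1.trans hy₀.2)).mpr hy₀.2.le) hρ
  have hK' : K / (γ + 1) ≤ K' :=
    le_trans (by gcongr; exact le_mul_of_one_le_right hK.le hC) (le_max_right _ _)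
  have hseg : ∀ t ∈ Icc (0:ℝ) 1, x + t * (y₀ - x) ∈ Ioo 0 y₁ := fun t ht =>
    add_mul_sub_mem_Ioo hx hy₀ ht
  refine ⟨?_, ?_, ?_, ?_⟩
  · calc K'⁻¹ ≤ (K * (γ + 1))⁻¹ := inv_anti₀ (by positivity) (le_max_left _ _)
      _ = K⁻¹ / (γ + 1) := by rw [mul_inv, div_eq_mul_inv]
      _ ≤ segmentAverage γ y₀ f x :=
        div_le_segmentAverage hγ hfc hy₀ hx fun y hy => (hfb y hy).1
  · refine (le_abs_self _).trans ((abs_segmentAverage_le hγ fun t ht => ?_).trans hK')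
    have hfpos : 0 < f (x + t * (y₀ - x)) := (inv_pos.mpr hK).trans_le (hfb _ (hseg t ht)).1
    rw [abs_of_pos hfpos]
    exact (hfb _ (hseg t ht)).2.1
  · calc |segmentAverage (γ + 1) y₀ f' x| ≤ K / (γ + 1 + 1) :=
        abs_segmentAverage_le (by linarith) fun t ht => (hfb _ (hseg t ht)).2.2.1
      _ ≤ K / (γ + 1) := by gcongr; linarith
      _ ≤ K' := hK'
  · calc |segmentAverage (γ + 1 + 1) y₀ f'' x| ≤ K * (y₀ / y₁) ^ ρ / (γ + 1 + 1 + 1) * x ^ ρ :=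
        abs_segmentAverage_le_mul_rpow (by linarith) hK.le hρ hy₀ hx fun y hy => (hfb y hy).2.2.2
      _ ≤ K' * x ^ ρ := by
        gcongr
        · exact Real.rpow_nonneg hx.1.le ρ
        · exact le_trans (by gcongr; linarith) (le_max_right _ _)

end Estimates

/-- The averaging operator `g^γ_{y₀,y₁}` maps the class `𝒞^ρ_{y₁}(K)` into `𝒞^ρ_{y₁}(K̃)`:
given `f ∈ 𝒞^ρ_{y₁}(K)`, the piecewise-defined average extends to a `C²` function `G` on
`(0,y₁)` with two-sided bounds and derivative bounds with constant depending only on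
`K, ρ, y₀, y₁, γ`. -/
theorem stmt_1 (y₀ y₁ γ K ρ : ℝ) (hy₀ : 0 < y₀) (hy : y₀ < y₁) (hγ : -1 < γ)
    (hK : 0 < K) (hρ : ρ ≤ 0) :
    ∃ K' : ℝ, 0 < K' ∧
      ∀ (f f' f'' : ℝ → ℝ),
        (∀ x ∈ Ioo (0:ℝ) y₁, HasDerivAt f (f' x) x) →
        (∀ x ∈ Ioo (0:ℝ) y₁, HasDerivAt f' (f'' x) x) →
        ContinuousOn f'' (Ioo 0 y₁) →
        (∀ x ∈ Ioo (0:ℝ) y₁, 0 < f x) →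
        (∀ x ∈ Ioo (0:ℝ) y₁,
          K⁻¹ ≤ f x ∧ f x ≤ K ∧ |f' x| ≤ K ∧ |f'' x| ≤ K * x ^ ρ) →
        ∃ G G' G'' : ℝ → ℝ,
          (∀ x ∈ Ioo (0:ℝ) y₁, x < y₀ →
            G x = (y₀ - x) ^ (-γ - 1) * ∫ y in x..y₀, (y₀ - y) ^ γ * f y) ∧
          (∀ x ∈ Ioo (0:ℝ) y₁, y₀ < x →
            G x = (x - y₀) ^ (-γ - 1) * ∫ y in y₀..x, (y - y₀) ^ γ * f y) ∧
          (∀ x ∈ Ioo (0:ℝ) y₁, HasDerivAt G (G' x) x) ∧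
          (∀ x ∈ Ioo (0:ℝ) y₁, HasDerivAt G' (G'' x) x) ∧
          ContinuousOn G'' (Ioo 0 y₁) ∧
          (∀ x ∈ Ioo (0:ℝ) y₁,
            K'⁻¹ ≤ G x ∧ G x ≤ K' ∧ |G' x| ≤ K' ∧ |G'' x| ≤ K' * x ^ ρ) := by
  refine ⟨max (K * (γ + 1)) (K * (y₀ / y₁) ^ ρ / (γ + 1)),
    lt_max_of_lt_left (mul_pos hK (by linarith)), ?_⟩
  intro f f' f'' hf hf' hf''c _ hfb
  have hy₀mem : y₀ ∈ Ioo 0 y₁ := ⟨hy₀, hy⟩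
  have hfc : ContinuousOn f (Ioo 0 y₁) := fun x hx => (hf x hx).continuousAt.continuousWithinAt
  have hf'c : ContinuousOn f' (Ioo 0 y₁) := fun x hx => (hf' x hx).continuousAt.continuousWithinAt
  have hKρ : AntitoneOn (fun x => K * x ^ ρ) (Ioo 0 y₁) := fun u hu _ _ huv =>
    mul_le_mul_of_nonneg_left (Real.rpow_le_rpow_of_nonpos hu.1 huv hρ) hK.le
  exact ⟨segmentAverage γ y₀ f, segmentAverage (γ + 1) y₀ f', segmentAverage (γ + 1 + 1) y₀ f'',
    fun x _ hx => segmentAverage_eq_of_lt f hx, fun x _ hx => segmentAverage_eq_of_gt f hx,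
    fun x hx => hasDerivAt_segmentAverage hγ hf hf'c (B := fun _ => K)
      (fun y hy => (hfb y hy).2.2.1) antitoneOn_const hy₀mem hx,
    fun x hx => hasDerivAt_segmentAverage (by linarith) hf' hf''c
      (fun y hy => (hfb y hy).2.2.2) hKρ hy₀mem hx,
    continuousOn_segmentAverage (by linarith) hf''c (fun y hy => (hfb y hy).2.2.2) hKρ hy₀mem,
    fun x hx => segmentAverage_estimates hγ hK hρ hy₀mem hfc hfb hx⟩
end

section
/- Let $d > 1$, $\varkappa \ge 1$, and $U \in \mathcal{P}^d_+(\varkappa)$ with transition point $x_0$ (i.e., $U(x_0)=1$). Define $\beta(x) = (U(x)-1)/(x-x_0)$ for $x \ne x_0$ and $\beta(x_0) = U'(x_0)$. Then $\beta$ is continuous and positive on $\mathbb{R}^+$, and there exist constants $c, C > 0$ depending only on $d,\varkappa$ and a fixed $x_1 > x_0$ with $x_1$ comparable to $1$, such that $c \le \beta(x) \le C$ for all $x \in (0, x_1]$. -/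
open Set Filter Topology

/-- Membership in the class `𝒫^d_+(κ)` of potentials on `ℝ⁺`, expressed via given
derivative functions `U', U'', U'''`. -/
def PotClassP (d κ : ℝ) (U U' U'' U''' : ℝ → ℝ) : Prop :=
  (∀ x > (0:ℝ), HasDerivAt U (U' x) x) ∧
  (∀ x > (0:ℝ), HasDerivAt U' (U'' x) x) ∧
  (∀ x > (0:ℝ), HasDerivAt U'' (U''' x) x) ∧
  (∀ x > (0:ℝ), κ⁻¹ * x ^ d ≤ U x ∧ U x ≤ κ * x ^ d) ∧
  (∀ x > (0:ℝ), κ⁻¹ * x ^ (d - 1) ≤ U' x ∧ U' x ≤ κ * x ^ (d - 1)) ∧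
  (∀ x > (0:ℝ), |U'' x| ≤ κ * x ^ (d - 2)) ∧
  (∀ x > (0:ℝ), |U''' x| ≤ κ * x ^ (d - 3))

/-- The auxiliary function `β(x) = (U(x)-1)/(x-x₀)` (with `β(x₀) = U'(x₀)`) is continuous
and positive on `ℝ⁺`, and is bounded above and below on `(0,x₁]` for a point `x₁ > x₀`
comparable to `1`, all constants depending only on `d, κ`. -/
theorem stmt_5 (d κ : ℝ) (hd : 1 < d) (hκ : 1 ≤ κ) :
    ∃ c C c₁ C₁ : ℝ, 0 < c ∧ 0 < C ∧ 0 < c₁ ∧ 0 < C₁ ∧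
      ∀ (U U' U'' U''' : ℝ → ℝ) (x₀ : ℝ),
        PotClassP d κ U U' U'' U''' → 0 < x₀ → U x₀ = 1 →
        ∀ β : ℝ → ℝ,
          (∀ x, β x = if x = x₀ then U' x₀ else (U x - 1) / (x - x₀)) →
          ContinuousOn β (Ioi 0) ∧
          (∀ x > (0:ℝ), 0 < β x) ∧
          ∃ x₁ : ℝ, x₀ < x₁ ∧ c₁ ≤ x₁ ∧ x₁ ≤ C₁ ∧
            ∀ x ∈ Ioc (0:ℝ) x₁, c ≤ β x ∧ β x ≤ C := by
  have hκ0 : (0:ℝ) < κ := by linarith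
  refine ⟨min ((2*κ)⁻¹) (κ⁻¹ * ((2*κ)⁻¹) ^ (d-1)), κ * (κ+1) ^ (d-1), 1, κ + 1,
    by positivity, by positivity, one_pos, by linarith, ?_⟩
  intro U U' U'' U''' x₀ hP hx₀ hU1 β hβ
  obtain ⟨hdU, hdU', hdU'', hUb, hU'b, hU''b, hU'''b⟩ := hP
  have hx0d := hUb x₀ hx₀
  have hrpos : (0:ℝ) < x₀ ^ d := Real.rpow_pos_of_pos hx₀ d
  -- x₀ ≤ κ
  have hx₀κ : x₀ ≤ κ := by
    rcases le_or_gt x₀ 1 with h | h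
    · linarith
    · have h1 : x₀ ^ (1:ℝ) ≤ x₀ ^ d := Real.rpow_le_rpow_of_exponent_le h.le hd.le
      rw [Real.rpow_one] at h1
      have h2 : κ⁻¹ * x₀ ^ d ≤ 1 := by rw [← hU1]; exact hx0d.1
      have h3 : x₀ ^ d ≤ κ := by
        have := mul_le_mul_of_nonneg_left h2 hκ0.le
        rw [← mul_assoc, mul_inv_cancel₀ hκ0.ne', one_mul, mul_one] at this
        exact this
      linarith
  -- κ⁻¹ ≤ x₀
  have hκx₀ : κ⁻¹ ≤ x₀ := by
    rcases le_or_gt 1 x₀ with h | h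
    · have : κ⁻¹ ≤ 1 := by rw [inv_le_one_iff₀]; right; exact hκ
      linarith
    · have h1 : x₀ ^ d ≤ x₀ := by
        have := Real.rpow_le_rpow_of_exponent_ge hx₀ h.le hd.le
        rwa [Real.rpow_one] at this
      have h2 : 1 ≤ κ * x₀ := by
        have := hx0d.2
        rw [hU1] at this
        nlinarith
      rw [inv_le_iff_one_le_mul₀' hκ0]
      linarith [mul_comm κ x₀]
  have hcontU : ∀ x > (0:ℝ), ContinuousAt U x := fun x hx => (hdU x hx).continuousAt
  -- MVT-type representation of β
  have key : ∀ x > (0:ℝ), ∃ ξ, min x x₀ ≤ ξ ∧ ξ ≤ max x x₀ ∧ 0 < ξ ∧ U' ξ = β x := by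
    intro x hx
    rcases lt_trichotomy x x₀ with h | h | h
    · obtain ⟨ξ, hξ, hξeq⟩ := exists_hasDerivAt_eq_slope U U' h
        (fun y hy => (hcontU y (lt_of_lt_of_le hx hy.1)).continuousWithinAt)
        (fun y hy => hdU y (lt_trans hx hy.1))
      refine ⟨ξ, (lt_of_le_of_lt (min_le_left _ _) hξ.1).le, le_trans hξ.2.le (le_max_right _ _),
        lt_trans hx hξ.1, ?_⟩
      rw [hβ x, if_neg h.ne, hξeq, hU1]
      rw [div_eq_div_iff (by linarith) (by linarith : x - x₀ ≠ 0)]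
      ring
    · exact ⟨x₀, by simp [h], by simp [h], hx₀, by rw [hβ x, if_pos h]⟩
    · obtain ⟨ξ, hξ, hξeq⟩ := exists_hasDerivAt_eq_slope U U' h
        (fun y hy => (hcontU y (lt_of_lt_of_le hx₀ hy.1)).continuousWithinAt)
        (fun y hy => hdU y (lt_trans hx₀ hy.1))
      refine ⟨ξ, (lt_of_le_of_lt (min_le_right _ _) hξ.1).le, le_trans hξ.2.le (le_max_left _ _),
        lt_trans hx₀ hξ.1, ?_⟩
      rw [hβ x, if_neg h.ne', hξeq, hU1]
  -- positivity
  have hpos : ∀ x > (0:ℝ), 0 < β x := by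
    intro x hx
    obtain ⟨ξ, -, -, hξ0, hξeq⟩ := key x hx
    have := (hU'b ξ hξ0).1
    have h2 : (0:ℝ) < κ⁻¹ * ξ ^ (d-1) := by positivity
    rw [← hξeq]; linarith
  refine ⟨?_, hpos, x₀ + 1, by linarith, by linarith, by linarith, ?_⟩
  · -- continuity
    intro x hx
    rcases eq_or_ne x x₀ with rfl | hne
    · have hslope := hasDerivAt_iff_tendsto_slope.mp (hdU x hx₀)
      have heq : ∀ᶠ y in 𝓝[≠] x, slope U x y = β y := by
        filter_upwards [self_mem_nhdsWithin] with y hy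
        rw [hβ y, if_neg (show y ≠ x from hy), slope_def_field, hU1]
      have h2 : Tendsto β (𝓝[≠] x) (𝓝 (β x)) := by
        rw [hβ x, if_pos rfl]
        exact hslope.congr' heq
      have h3 : Tendsto β (𝓝 x) (𝓝 (β x)) := by
        rw [← nhdsNE_sup_pure x]
        exact h2.sup (tendsto_pure_nhds β x)
      exact ContinuousAt.continuousWithinAt h3
    · have hev : β =ᶠ[𝓝 x] (fun y => (U y - 1)/(y - x₀)) := by
        filter_upwards [isOpen_compl_singleton.mem_nhds hne] with y hy
        rw [hβ y, if_neg (show y ≠ x₀ from hy)]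
      have hca : ContinuousAt (fun y => (U y - 1)/(y - x₀)) x :=
        ((hcontU x hx).sub continuousAt_const).div
          (continuousAt_id.sub continuousAt_const) (sub_ne_zero.mpr hne)
      exact (hca.congr hev.symm).continuousWithinAt
  · -- bounds on (0, x₀+1]
    rintro x ⟨hx0, hx1⟩
    obtain ⟨ξ, hξmin, hξmax, hξ0, hξeq⟩ := key x hx0
    constructor
    · rcases le_or_gt x ((2*κ)⁻¹) with hxs | hxs
      · -- small x case
        have hτκ : (2*κ)⁻¹ < κ⁻¹ := by
          apply inv_strictAnti₀ hκ0; linarith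
        have hxlt : x < x₀ := lt_of_le_of_lt hxs (lt_of_lt_of_le hτκ hκx₀)
        have hx12 : x ≤ 1 := by
          have : (2*κ)⁻¹ ≤ 1 := by
            rw [inv_le_one_iff₀]; right; linarith
          linarith
        have hxd : x ^ d ≤ x := by
          have := Real.rpow_le_rpow_of_exponent_ge hx0 hx12 hd.le
          rwa [Real.rpow_one] at this
        have hUx : U x ≤ 1/2 := by
          have h1 := (hUb x hx0).2
          have h2 : κ * x ≤ κ * (2*κ)⁻¹ := by nlinarith
          have h3 : κ * (2*κ)⁻¹ = 1/2 := by field_simp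
          nlinarith [Real.rpow_pos_of_pos hx0 d]
        have hgoal : (2*κ)⁻¹ ≤ β x := by
          rw [hβ x, if_neg hxlt.ne]
          have hrw : (U x - 1)/(x - x₀) = (1 - U x)/(x₀ - x) := by
            rw [div_eq_div_iff (by linarith : x - x₀ ≠ 0) (by linarith)]
            ring
          rw [hrw, le_div_iff₀ (by linarith : (0:ℝ) < x₀ - x)]
          have h4 : (2*κ)⁻¹ * (x₀ - x) ≤ (2*κ)⁻¹ * κ := by
            apply mul_le_mul_of_nonneg_left (by linarith) (by positivity)
          have h5 : (2*κ)⁻¹ * κ = 1/2 := by field_simp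
          linarith
        exact le_trans (min_le_left _ _) hgoal
      · -- x ≥ (2κ)⁻¹: use MVT lower bound
        have hτξ : (2*κ)⁻¹ ≤ ξ := by
          have h1 : (2*κ)⁻¹ ≤ min x x₀ := by
            apply le_min hxs.le
            have : (2*κ)⁻¹ ≤ κ⁻¹ := by
              apply inv_anti₀ hκ0; linarith
            linarith
          linarith
        have hrp : ((2*κ)⁻¹ : ℝ) ^ (d-1) ≤ ξ ^ (d-1) :=
          Real.rpow_le_rpow (by positivity) hτξ (by linarith)
        have h2 := (hU'b ξ hξ0).1
        have h3 : κ⁻¹ * ((2*κ)⁻¹) ^ (d-1) ≤ κ⁻¹ * ξ ^ (d-1) := by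
          apply mul_le_mul_of_nonneg_left hrp (by positivity)
        rw [← hξeq]
        exact le_trans (min_le_right _ _) (le_trans h3 h2)
    · -- upper bound
      have hξle : ξ ≤ κ + 1 := by
        have : max x x₀ ≤ κ + 1 := max_le (by linarith) (by linarith)
        linarith
      have hrp : ξ ^ (d-1) ≤ (κ+1) ^ (d-1) :=
        Real.rpow_le_rpow hξ0.le hξle (by linarith)
      have h2 := (hU'b ξ hξ0).2
      rw [← hξeq]
      calc U' ξ ≤ κ * ξ ^ (d-1) := h2
        _ ≤ κ * (κ+1) ^ (d-1) := by apply mul_le_mul_of_nonneg_left hrp hκ0.le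
end

section
/- Let $d > 1$, $\varkappa \ge 1$, $U \in \mathcal{P}^d_+(\varkappa)$, $x_0$ the transition point with $U(x_0)=1$, and $\beta(x)=(U(x)-1)/(x-x_0)$ (with $\beta(x_0)=U'(x_0)$). Then $\beta$ is $C^2$ on $(0,x_1]$ for any $x_1>x_0$, and on $(0,x_1]$ satisfies $|\beta'(x)| \le C$ and $|\beta''(x)| \le C x^{\min\{d-2,0\}}$, where $C$ depends only on $d$, $\varkappa$, and $x_1$. -/
/-!
Writing `β(x) = ∫₀¹ U'(x₀ + t (x - x₀)) dt`, differentiation under the integral sign gives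
`β' = ∫₀¹ t U''(x₀ + t (x - x₀)) dt` and `β'' = ∫₀¹ t² U'''(x₀ + t (x - x₀)) dt`.
Since `U(x₀) = 1` forces `x₀ ≥ κ^{-1/d}`, near `x₀` (`|x - x₀| ≤ x₀/2`) these integrals only
sample `U''`, `U'''` on a fixed compact subinterval of `(0, ∞)`. Away from `x₀` one uses instead
`U' - β = β' (x - x₀)` and `U'' - 2β' = β'' (x - x₀)`, where `|x - x₀|` is bounded below and
`|U''(x)| ≤ κ x^{d-2}` produces the singular factor `x^{min(d-2,0)}`. The second identity also
gives continuity of `β''` at `x₀`, where `U'''` need not be continuous: there `β''` is the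
difference quotient of `U'' - 2β'`.
-/

open Set Filter Topology MeasureTheory intervalIntegral
open scoped Interval

lemma rpow_le_max_of_mem_Icc {a b y p : ℝ} (ha : 0 < a) (hy : y ∈ Icc a b) :
    y ^ p ≤ max (a ^ p) (b ^ p) := by
  rcases le_or_gt 0 p with hp | hp
  · exact le_max_of_le_right (Real.rpow_le_rpow (ha.le.trans hy.1) hy.2 hp)
  · exact le_max_of_le_left (Real.rpow_le_rpow_of_nonpos ha hy.1 hp.le)

lemma rpow_le_rpow_sub_mul_rpow {x b p q : ℝ} (hx : 0 < x) (hxb : x ≤ b) (hpq : p ≤ q) :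
    x ^ q ≤ b ^ (q - p) * x ^ p := by
  calc x ^ q = x ^ (q - p) * x ^ p := by rw [← Real.rpow_add hx, sub_add_cancel]
    _ ≤ b ^ (q - p) * x ^ p := by gcongr

lemma abs_le_mul_max_rpow {V : ℝ → ℝ} {κ q a b y : ℝ} (hV : ∀ y > 0, |V y| ≤ κ * y ^ q)
    (ha : 0 < a) (hy : y ∈ Icc a b) : |V y| ≤ κ * max (a ^ q) (b ^ q) := by
  have hy₀ : 0 < y := ha.trans_le hy.1
  have hκ : 0 ≤ κ :=
    nonneg_of_mul_nonneg_left ((abs_nonneg _).trans (hV y hy₀)) (Real.rpow_pos_of_pos hy₀ q)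
  exact (hV y hy₀).trans (mul_le_mul_of_nonneg_left (rpow_le_max_of_mem_Icc ha hy) hκ)

lemma abs_le_div_of_eq_mul_sub {a b x x₀ δ G : ℝ} (hδ : 0 < δ) (hx : δ ≤ |x - x₀|)
    (h : b = a * (x - x₀)) (hb : |b| ≤ G) : |a| ≤ G / δ := by
  rw [le_div_iff₀ hδ]
  calc |a| * δ ≤ |a| * |x - x₀| := by gcongr
    _ = |b| := by rw [h, abs_mul]
    _ ≤ G := hb

lemma add_mul_sub_mem_Icc_of_abs_sub_le {δ x₀ x₁ x t : ℝ} (hδx₀ : δ ≤ x₀ / 2) (hx₀x₁ : x₀ ≤ x₁)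
    (hx : x ≤ x₁) (hnear : |x - x₀| ≤ x₀ / 2) (ht : t ∈ Icc (0:ℝ) 1) :
    x₀ + t * (x - x₀) ∈ Icc δ x₁ := by
  rw [abs_le] at hnear
  exact (convex_Icc δ x₁).add_smul_sub_mem ⟨by linarith, hx₀x₁⟩ ⟨by linarith, hx⟩ ht

lemma exists_ball_subset_Icc_and_mem {x₀ x : ℝ} (hx₀ : 0 < x₀) (hx : 0 < x) :
    ∃ m > 0, ∃ M, x₀ ∈ Icc m M ∧ Metric.ball x m ⊆ Icc m M := by
  refine ⟨min x x₀ / 2, by positivity, x + x₀, ⟨by linarith [min_le_right x x₀], by linarith⟩,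
    fun z hz => ?_⟩
  rw [Metric.mem_ball, Real.dist_eq, abs_lt] at hz
  constructor <;> linarith [min_le_left x x₀, min_le_right x x₀]

lemma norm_pow_mul_le {t a A : ℝ} (ht : t ∈ Icc (0:ℝ) 1) (n : ℕ) (ha : |a| ≤ A) :
    ‖t ^ n * a‖ ≤ A := by
  rw [Real.norm_eq_abs, abs_mul, abs_pow, abs_of_nonneg ht.1]
  exact (mul_le_of_le_one_left (abs_nonneg _) (pow_le_one₀ ht.1 ht.2)).trans ha

lemma eq_mul_sub_add_of_hasDerivAt {f g : ℝ → ℝ} {f' g' x x₀ : ℝ} (hf : HasDerivAt f f' x)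
    (hg : HasDerivAt g g' x) (hfg : g =ᶠ[𝓝 x] fun z => f z * (z - x₀)) :
    g' = f' * (x - x₀) + f x := by
  have hprod := hf.mul ((hasDerivAt_id x).sub_const x₀)
  simpa using hg.unique (hprod.congr_of_eventuallyEq hfg)

lemma continuousOn_of_eq_mul_sub {ψ f : ℝ → ℝ} {s : Set ℝ} {x₀ : ℝ} (hs : IsOpen s)
    (hψ : ContinuousOn ψ s) (hψx₀ : HasDerivAt ψ (f x₀) x₀)
    (hψf : ∀ z ∈ s, ψ z = f z * (z - x₀)) : ContinuousOn f s := by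
  intro x hx
  refine ContinuousAt.continuousWithinAt ?_
  rcases eq_or_ne x x₀ with rfl | hne
  · have hslope : slope ψ x =ᶠ[𝓝[≠] x] f := by
      filter_upwards [nhdsWithin_le_nhds (hs.mem_nhds hx), self_mem_nhdsWithin] with z hz hzx
      rw [slope_def_field, hψf z hz, hψf x hx, sub_self, mul_zero, sub_zero,
        mul_div_cancel_right₀ _ (sub_ne_zero.2 hzx)]
    exact continuousWithinAt_compl_self.1
      ((hasDerivAt_iff_tendsto_slope.1 hψx₀).congr' hslope)
  · have hquot : ContinuousAt (fun z => ψ z / (z - x₀)) x :=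
      (hψ.continuousAt (hs.mem_nhds hx)).div (by fun_prop) (sub_ne_zero.2 hne)
    refine hquot.congr ?_
    filter_upwards [hs.mem_nhds hx, compl_singleton_mem_nhds hne] with z hz hzx
    rw [hψf z hz, mul_div_cancel_right₀ _ (sub_ne_zero.2 hzx)]

noncomputable def segmentMoment (n : ℕ) (V : ℝ → ℝ) (x₀ z : ℝ) : ℝ :=
  ∫ t in (0:ℝ)..1, t ^ n * V (x₀ + t * (z - x₀))

section SegmentMoment

variable {n : ℕ} {V V' : ℝ → ℝ} {x₀ z : ℝ}

lemma segmentMoment_self (n : ℕ) (V : ℝ → ℝ) (x₀ : ℝ) :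
    segmentMoment n V x₀ x₀ = V x₀ / (n + 1) := by
  simp [segmentMoment, intervalIntegral.integral_mul_const, integral_pow, inv_mul_eq_div]

lemma abs_segmentMoment_le {A : ℝ} (hV : ∀ t ∈ Icc (0:ℝ) 1, |V (x₀ + t * (z - x₀))| ≤ A) :
    |segmentMoment n V x₀ z| ≤ A := by
  have hpt : ∀ t ∈ Ι (0:ℝ) 1, ‖t ^ n * V (x₀ + t * (z - x₀))‖ ≤ A := by
    intro t ht
    rw [uIoc_of_le zero_le_one] at ht
    exact norm_pow_mul_le (Ioc_subset_Icc_self ht) n (hV t (Ioc_subset_Icc_self ht))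
  simpa [segmentMoment] using norm_integral_le_of_norm_le_const hpt

lemma continuousOn_segment_integrand {s : Set ℝ} (hs : Convex ℝ s) (hV : ContinuousOn V s)
    (hx₀ : x₀ ∈ s) (hz : z ∈ s) (n : ℕ) :
    ContinuousOn (fun t => t ^ n * V (x₀ + t * (z - x₀))) (Icc 0 1) :=
  (continuousOn_pow n).mul
    (hV.comp (by fun_prop) fun _ ht => hs.add_smul_sub_mem hx₀ hz ht)

lemma sub_eq_segmentMoment_zero_mul (hV : ∀ y > 0, HasDerivAt V (V' y) y)
    (hV' : ContinuousOn V' (Ioi 0)) (hx₀ : 0 < x₀) (hz : 0 < z) :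
    V z - V x₀ = segmentMoment 0 V' x₀ z * (z - x₀) := by
  have hderiv : ∀ t ∈ uIcc (0:ℝ) 1, HasDerivAt (fun t => V (x₀ + t * (z - x₀)))
      (t ^ 0 * V' (x₀ + t * (z - x₀)) * (z - x₀)) t := by
    intro t ht
    rw [uIcc_of_le zero_le_one] at ht
    have hseg : 0 < x₀ + t * (z - x₀) := (convex_Ioi (0:ℝ)).add_smul_sub_mem hx₀ hz ht
    have hinner : HasDerivAt (fun t => x₀ + t * (z - x₀)) (z - x₀) t := by
      simpa using ((hasDerivAt_id t).mul_const (z - x₀)).const_add x₀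
    simpa [Function.comp_def] using (hV _ hseg).comp t hinner
  have hint : IntervalIntegrable (fun t => t ^ 0 * V' (x₀ + t * (z - x₀)) * (z - x₀)) volume 0 1 :=
    ((continuousOn_segment_integrand (convex_Ioi (0:ℝ)) hV' hx₀ hz 0).mul
      continuousOn_const).intervalIntegrable_of_Icc zero_le_one
  have hFTC := integral_eq_sub_of_hasDerivAt hderiv hint
  rw [intervalIntegral.integral_mul_const] at hFTC
  simpa [segmentMoment] using hFTC.symm

theorem hasDerivAt_segmentMoment (hV : ∀ y > 0, HasDerivAt V (V' y) y)
    (hV'_bdd : ∀ a b, 0 < a → ∃ K, ∀ y ∈ Icc a b, |V' y| ≤ K) (n : ℕ) {x : ℝ}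
    (hx₀ : 0 < x₀) (hx : 0 < x) :
    HasDerivAt (segmentMoment n V x₀) (segmentMoment (n + 1) V' x₀ x) x := by
  obtain ⟨m, hm, M, hx₀mem, hball⟩ := exists_ball_subset_Icc_and_mem hx₀ hx
  obtain ⟨K, hK⟩ := hV'_bdd m M hm
  have hseg : ∀ z ∈ Metric.ball x m, ∀ t ∈ Icc (0:ℝ) 1, x₀ + t * (z - x₀) ∈ Icc m M :=
    fun z hz t ht => (convex_Icc _ _).add_smul_sub_mem hx₀mem (hball hz) ht
  have hVc : ContinuousOn V (Icc m M) := fun y hy =>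
    (hV y (hm.trans_le hy.1)).continuousAt.continuousWithinAt
  have hcont : ∀ z ∈ Metric.ball x m,
      ContinuousOn (fun t => t ^ n * V (x₀ + t * (z - x₀))) (Ι 0 1) := fun z hz =>
    (continuousOn_segment_integrand (convex_Icc _ _) hVc hx₀mem (hball hz) n).mono
      (by rw [uIoc_of_le zero_le_one]; exact Ioc_subset_Icc_self)
  have hxball : x ∈ Metric.ball x m := Metric.mem_ball_self hm
  refine (hasDerivAt_integral_of_dominated_loc_of_deriv_le
    (F := fun z t => t ^ n * V (x₀ + t * (z - x₀)))
    (F' := fun z t => t ^ (n + 1) * V' (x₀ + t * (z - x₀))) (bound := fun _ => K)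
    (Metric.ball_mem_nhds x hm) ?_ ?_ ?_ ?_ intervalIntegrable_const ?_).2
  · filter_upwards [Metric.ball_mem_nhds x hm] with z hz
    exact (hcont z hz).aestronglyMeasurable measurableSet_uIoc
  · exact (continuousOn_segment_integrand (convex_Icc _ _) hVc hx₀mem (hball hxball)
      n).intervalIntegrable_of_Icc zero_le_one
  · -- `V'` agrees with the measurable function `deriv V` on the segment
    have hmeas : Measurable fun t : ℝ => t ^ (n + 1) * deriv V (x₀ + t * (x - x₀)) :=
      (measurable_id.pow_const _).mul ((measurable_deriv V).comp (by fun_prop))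
    refine hmeas.aestronglyMeasurable.congr ?_
    refine (ae_restrict_mem measurableSet_uIoc).mono fun t ht => ?_
    rw [uIoc_of_le zero_le_one] at ht
    have hy := hseg x hxball t (Ioc_subset_Icc_self ht)
    simp [(hV _ (hm.trans_le hy.1)).deriv]
  · refine Eventually.of_forall fun t ht z hz => ?_
    rw [uIoc_of_le zero_le_one] at ht
    exact norm_pow_mul_le (Ioc_subset_Icc_self ht) _ (hK _ (hseg z hz t (Ioc_subset_Icc_self ht)))
  · refine Eventually.of_forall fun t ht z hz => ?_
    rw [uIoc_of_le zero_le_one] at ht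
    have hy := hseg z hz t (Ioc_subset_Icc_self ht)
    have hinner : HasDerivAt (fun z => x₀ + t * (z - x₀)) t z := by
      simpa using (((hasDerivAt_id z).sub_const x₀).const_mul t).const_add x₀
    exact (((hV _ (hm.trans_le hy.1)).comp z hinner).const_mul (t ^ n)).congr_deriv (by ring)

end SegmentMoment

namespace PotClassP

variable {d κ x₀ x₁ δ : ℝ} {U U' U'' U''' : ℝ → ℝ}

lemma inv_rpow_inv_le (hU : PotClassP d κ U U' U'' U''') (hκ : 0 < κ) (hd : 0 < d)
    (hx₀ : 0 < x₀) (hUx₀ : U x₀ = 1) : κ⁻¹ ^ d⁻¹ ≤ x₀ := by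
  rw [Real.rpow_inv_le_iff_of_pos (inv_nonneg.2 hκ.le) hx₀.le hd, inv_le_iff_one_le_mul₀' hκ]
  exact hUx₀ ▸ (hU.2.2.2.1 x₀ hx₀).2

lemma abs_deriv_le_of_mem_Ioc (hU : PotClassP d κ U U' U'' U''') (hκ : 0 ≤ κ) (hd : 1 ≤ d) {y : ℝ}
    (hy : y ∈ Ioc 0 x₁) : |U' y| ≤ κ * x₁ ^ (d - 1) := by
  obtain ⟨hlow, hup⟩ := hU.2.2.2.2.1 y hy.1
  have hyx₁ : y ^ (d - 1) ≤ x₁ ^ (d - 1) := Real.rpow_le_rpow hy.1.le hy.2 (by linarith)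
  have hy₀ : 0 ≤ κ⁻¹ * y ^ (d - 1) := mul_nonneg (inv_nonneg.2 hκ) (Real.rpow_nonneg hy.1.le _)
  rw [abs_le]
  constructor <;> nlinarith

lemma hasDerivAt_segmentMoment_zero (hU : PotClassP d κ U U' U'' U''') (hx₀ : 0 < x₀)
    {x : ℝ} (hx : 0 < x) : HasDerivAt (segmentMoment 0 U' x₀) (segmentMoment 1 U'' x₀ x) x :=
  hasDerivAt_segmentMoment hU.2.1
    (fun _ _ ha => ⟨_, fun _ hy => abs_le_mul_max_rpow hU.2.2.2.2.2.1 ha hy⟩) 0 hx₀ hx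

lemma hasDerivAt_segmentMoment_one (hU : PotClassP d κ U U' U'' U''') (hx₀ : 0 < x₀)
    {x : ℝ} (hx : 0 < x) : HasDerivAt (segmentMoment 1 U'' x₀) (segmentMoment 2 U''' x₀ x) x :=
  hasDerivAt_segmentMoment hU.2.2.1
    (fun _ _ ha => ⟨_, fun _ hy => abs_le_mul_max_rpow hU.2.2.2.2.2.2 ha hy⟩) 1 hx₀ hx

lemma sub_eq_segmentMoment_zero_mul (hU : PotClassP d κ U U' U'' U''') (hx₀ : 0 < x₀)
    {z : ℝ} (hz : 0 < z) : U z - U x₀ = segmentMoment 0 U' x₀ z * (z - x₀) :=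
  _root_.sub_eq_segmentMoment_zero_mul hU.1
    (fun y hy => (hU.2.1 y hy).continuousAt.continuousWithinAt) hx₀ hz

lemma deriv_sub_eq_segmentMoment_one_mul (hU : PotClassP d κ U U' U'' U''') (hx₀ : 0 < x₀)
    {x : ℝ} (hx : 0 < x) :
    U' x - segmentMoment 0 U' x₀ x = segmentMoment 1 U'' x₀ x * (x - x₀) := by
  have h := eq_mul_sub_add_of_hasDerivAt (hU.hasDerivAt_segmentMoment_zero hx₀ hx)
    ((hU.1 x hx).sub_const (U x₀))
    (eventually_of_mem (Ioi_mem_nhds hx) fun z hz => hU.sub_eq_segmentMoment_zero_mul hx₀ hz)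
  linarith

lemma deriv2_sub_eq_segmentMoment_two_mul (hU : PotClassP d κ U U' U'' U''') (hx₀ : 0 < x₀)
    {x : ℝ} (hx : 0 < x) :
    U'' x - 2 * segmentMoment 1 U'' x₀ x = segmentMoment 2 U''' x₀ x * (x - x₀) := by
  have h := eq_mul_sub_add_of_hasDerivAt (hU.hasDerivAt_segmentMoment_one hx₀ hx)
    ((hU.2.1 x hx).sub (hU.hasDerivAt_segmentMoment_zero hx₀ hx))
    (eventually_of_mem (Ioi_mem_nhds hx) fun z hz =>
      hU.deriv_sub_eq_segmentMoment_one_mul hx₀ hz)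
  linarith

lemma continuousOn_segmentMoment_two (hU : PotClassP d κ U U' U'' U''') (hx₀ : 0 < x₀) :
    ContinuousOn (segmentMoment 2 U''' x₀) (Ioi 0) := by
  have hψ : HasDerivAt (fun z => U'' z - 2 * segmentMoment 1 U'' x₀ z)
      (segmentMoment 2 U''' x₀ x₀) x₀ := by
    refine ((hU.2.2.1 x₀ hx₀).sub
      ((hU.hasDerivAt_segmentMoment_one hx₀ hx₀).const_mul 2)).congr_deriv ?_
    rw [segmentMoment_self]
    push_cast
    ring
  refine continuousOn_of_eq_mul_sub isOpen_Ioi (fun z hz => ?_) hψ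
    fun z hz => hU.deriv2_sub_eq_segmentMoment_two_mul hx₀ hz
  exact ((hU.2.2.1 z hz).continuousAt.sub
    ((hU.hasDerivAt_segmentMoment_one hx₀ hz).continuousAt.const_mul 2)).continuousWithinAt

lemma eqOn_segmentMoment_zero (hU : PotClassP d κ U U' U'' U''') (hx₀ : 0 < x₀) {β : ℝ → ℝ}
    (hβ : ∀ x, β x = if x = x₀ then U' x₀ else (U x - U x₀) / (x - x₀)) :
    EqOn β (segmentMoment 0 U' x₀) (Ioi 0) := by
  intro z hz
  rw [hβ z]
  split_ifs with h
  · simp [h, segmentMoment_self]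
  · rw [hU.sub_eq_segmentMoment_zero_mul hx₀ hz, mul_div_cancel_right₀ _ (sub_ne_zero.2 h)]


lemma abs_segmentMoment_one_le (hU : PotClassP d κ U U' U'' U''') (hκ : 0 ≤ κ) (hd : 1 ≤ d)
    (hδ : 0 < δ) (hδx₀ : δ ≤ x₀ / 2) (hx₀x₁ : x₀ ≤ x₁) {x : ℝ} (hx : x ∈ Ioc 0 x₁) :
    |segmentMoment 1 U'' x₀ x| ≤
      max (κ * max (δ ^ (d - 2)) (x₁ ^ (d - 2))) (2 * κ * x₁ ^ (d - 1) / δ) := by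
  have hx₀ : 0 < x₀ := by linarith
  rcases le_or_gt |x - x₀| (x₀ / 2) with hnear | hfar
  · exact le_max_of_le_left (abs_segmentMoment_le fun t ht => abs_le_mul_max_rpow
      hU.2.2.2.2.2.1 hδ (add_mul_sub_mem_Icc_of_abs_sub_le hδx₀ hx₀x₁ hx.2 hnear ht))
  · refine le_max_of_le_right (abs_le_div_of_eq_mul_sub hδ (by linarith)
      (hU.deriv_sub_eq_segmentMoment_one_mul hx₀ hx.1) ?_)
    have hmean : |segmentMoment 0 U' x₀ x| ≤ κ * x₁ ^ (d - 1) := abs_segmentMoment_le fun t ht =>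
      hU.abs_deriv_le_of_mem_Ioc hκ hd ((convex_Ioc 0 x₁).add_smul_sub_mem ⟨hx₀, hx₀x₁⟩ hx ht)
    linarith [abs_sub (U' x) (segmentMoment 0 U' x₀ x), hU.abs_deriv_le_of_mem_Ioc hκ hd hx]

lemma abs_segmentMoment_two_le (hU : PotClassP d κ U U' U'' U''') (hκ : 0 ≤ κ) (hδ : 0 < δ)
    (hδx₀ : δ ≤ x₀ / 2) (hx₀x₁ : x₀ ≤ x₁) {x p C₁ : ℝ} (hx : x ∈ Ioc 0 x₁) (hp : p ≤ 0)
    (hpd : p ≤ d - 2) (hC₁ : |segmentMoment 1 U'' x₀ x| ≤ C₁) :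
    |segmentMoment 2 U''' x₀ x| ≤ max (κ * max (δ ^ (d - 3)) (x₁ ^ (d - 3)) * x₁ ^ (-p))
      ((κ * x₁ ^ (d - 2 - p) + 2 * C₁ * x₁ ^ (-p)) / δ) * x ^ p := by
  have hx₀ : 0 < x₀ := by linarith
  have hxp : 0 ≤ x ^ p := Real.rpow_nonneg hx.1.le p
  have hone : 1 ≤ x₁ ^ (-p) * x ^ p := by simpa using rpow_le_rpow_sub_mul_rpow hx.1 hx.2 hp
  rcases le_or_gt |x - x₀| (x₀ / 2) with hnear | hfar
  · set A := κ * max (δ ^ (d - 3)) (x₁ ^ (d - 3))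
    have hA : |segmentMoment 2 U''' x₀ x| ≤ A := abs_segmentMoment_le fun t ht =>
      abs_le_mul_max_rpow hU.2.2.2.2.2.2 hδ
        (add_mul_sub_mem_Icc_of_abs_sub_le hδx₀ hx₀x₁ hx.2 hnear ht)
    calc |segmentMoment 2 U''' x₀ x| ≤ A * (x₁ ^ (-p) * x ^ p) :=
          hA.trans (le_mul_of_one_le_right ((abs_nonneg _).trans hA) hone)
      _ = A * x₁ ^ (-p) * x ^ p := by ring
      _ ≤ _ := by gcongr; exact le_max_left _ _
  · have hU'' : |U'' x| ≤ κ * x₁ ^ (d - 2 - p) * x ^ p := by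
      rw [mul_assoc]
      exact (hU.2.2.2.2.2.1 x hx.1).trans
        (mul_le_mul_of_nonneg_left (rpow_le_rpow_sub_mul_rpow hx.1 hx.2 hpd) hκ)
    have hC₁' : 2 * C₁ ≤ 2 * C₁ * x₁ ^ (-p) * x ^ p := by
      rw [mul_assoc]
      exact le_mul_of_one_le_right (by linarith [abs_nonneg (segmentMoment 1 U'' x₀ x)]) hone
    have h2M : |2 * segmentMoment 1 U'' x₀ x| = 2 * |segmentMoment 1 U'' x₀ x| := by
      rw [abs_mul, abs_two]
    have h := abs_le_div_of_eq_mul_sub hδ (by linarith)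
      (hU.deriv2_sub_eq_segmentMoment_two_mul hx₀ hx.1)
      (G := (κ * x₁ ^ (d - 2 - p) + 2 * C₁ * x₁ ^ (-p)) * x ^ p)
      (by linarith [abs_sub (U'' x) (2 * segmentMoment 1 U'' x₀ x), h2M])
    rw [mul_div_right_comm] at h
    exact h.trans (by gcongr; exact le_max_right _ _)

end PotClassP

theorem stmt_6_general (d κ x₁ : ℝ) (hd : 1 < d) (hκ : 1 ≤ κ) :
    ∃ C : ℝ, 0 < C ∧
      ∀ (U U' U'' U''' : ℝ → ℝ) (x₀ : ℝ),
        PotClassP d κ U U' U'' U''' → 0 < x₀ → U x₀ = 1 → x₀ < x₁ →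
        ∀ β : ℝ → ℝ,
          (∀ x, β x = if x = x₀ then U' x₀ else (U x - 1) / (x - x₀)) →
          ∃ β' β'' : ℝ → ℝ,
            (∀ x ∈ Ioc (0:ℝ) x₁, HasDerivAt β (β' x) x) ∧
            (∀ x ∈ Ioc (0:ℝ) x₁, HasDerivAt β' (β'' x) x) ∧
            ContinuousOn β'' (Ioc 0 x₁) ∧
            ∀ x ∈ Ioc (0:ℝ) x₁,
              |β' x| ≤ C ∧ |β'' x| ≤ C * x ^ (min (d - 2) 0) := by
  set δ := κ⁻¹ ^ d⁻¹ / 2 with hδ_def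
  set p := min (d - 2) 0
  set C₁ := max (κ * max (δ ^ (d - 2)) (x₁ ^ (d - 2))) (2 * κ * x₁ ^ (d - 1) / δ)
  set C₂ := max (κ * max (δ ^ (d - 3)) (x₁ ^ (d - 3)) * x₁ ^ (-p))
    ((κ * x₁ ^ (d - 2 - p) + 2 * C₁ * x₁ ^ (-p)) / δ)
  refine ⟨max (max C₁ C₂) 1, lt_max_of_lt_right one_pos, ?_⟩
  rintro U U' U'' U''' x₀ hU hx₀ hUx₀ hx₀x₁ β hβ
  have hκ₀ : 0 < κ := by linarith
  have hδ : 0 < δ := by positivity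
  have hδx₀ : δ ≤ x₀ / 2 := by linarith [hU.inv_rpow_inv_le hκ₀ (by linarith) hx₀ hUx₀, hδ_def]
  have hβM : EqOn β (segmentMoment 0 U' x₀) (Ioi 0) :=
    hU.eqOn_segmentMoment_zero hx₀ (by simpa only [hUx₀] using hβ)
  have hC₁ : ∀ x ∈ Ioc 0 x₁, |segmentMoment 1 U'' x₀ x| ≤ C₁ := fun x hx =>
    hU.abs_segmentMoment_one_le hκ₀.le hd.le hδ hδx₀ hx₀x₁.le hx
  refine ⟨segmentMoment 1 U'' x₀, segmentMoment 2 U''' x₀, fun x hx => ?_,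
    fun x hx => hU.hasDerivAt_segmentMoment_one hx₀ hx.1,
    (hU.continuousOn_segmentMoment_two hx₀).mono Ioc_subset_Ioi_self, fun x hx => ⟨?_, ?_⟩⟩
  · exact (hU.hasDerivAt_segmentMoment_zero hx₀ hx.1).congr_of_eventuallyEq
      (eventually_of_mem (Ioi_mem_nhds hx.1) hβM)
  · exact (hC₁ x hx).trans ((le_max_left _ _).trans (le_max_left _ _))
  · refine (hU.abs_segmentMoment_two_le hκ₀.le hδ hδx₀ hx₀x₁.le hx (min_le_right _ _)
      (min_le_left _ _) (hC₁ x hx)).trans (mul_le_mul_of_nonneg_right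
        ((le_max_right _ _).trans (le_max_left _ _)) (Real.rpow_nonneg hx.1.le _))

/-- The function `β(x) = (U(x)-1)/(x-x₀)` (with `β(x₀)=U'(x₀)`) is `C²` on `(0,x₁]` for
any `x₁ > x₀`, with `|β'| ≤ C` and `|β''(x)| ≤ C x^{min(d-2,0)}` there, where `C` depends
only on `d`, `κ` and `x₁`. -/
theorem stmt_6 (d κ x₁ : ℝ) (hd : 1 < d) (hκ : 1 ≤ κ) (hx₁ : 0 < x₁) :
    ∃ C : ℝ, 0 < C ∧
      ∀ (U U' U'' U''' : ℝ → ℝ) (x₀ : ℝ),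
        PotClassP d κ U U' U'' U''' → 0 < x₀ → U x₀ = 1 → x₀ < x₁ →
        ∀ β : ℝ → ℝ,
          (∀ x, β x = if x = x₀ then U' x₀ else (U x - 1) / (x - x₀)) →
          ∃ β' β'' : ℝ → ℝ,
            (∀ x ∈ Ioc (0:ℝ) x₁, HasDerivAt β (β' x) x) ∧
            (∀ x ∈ Ioc (0:ℝ) x₁, HasDerivAt β' (β'' x) x) ∧
            ContinuousOn β'' (Ioc 0 x₁) ∧
            ∀ x ∈ Ioc (0:ℝ) x₁,
              |β' x| ≤ C ∧ |β'' x| ≤ C * x ^ (min (d - 2) 0) :=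
  stmt_6_general d κ x₁ hd hκ
end
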